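/- arXiv:math/0402232 — 2 statements merged into one kernel-verified Lean document; each statement's English description precedes it below -/
import Mathlib

section
/- Let H_1, ..., H_d be linear hyperplanes in V with defining linear forms h_1, ..., h_d, and let (W_j)_{j∈ℕ} be a nondecreasing sequence of intersections of the H_i's with W_m = V for large m. Set b_i = min{ m : W_m ⊄ H_i }. Then: (a) for every arc u = (u^{(j)})_j with u^{(j)} ∈ W_j for all j, the order of h_i(u(t)) is at least b_i for every i; and (b) there exists an arc u with u^{(j)} ∈ W_j for all j such that the order of h_i(u(t)) equals b_i for every i simultaneously. -/
/-- A vector space over `ℂ` is not a finite union of proper subspaces: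
given a submodule `W` and finitely many submodules `K i` none of which
contains `W`, there is an element of `W` avoiding all the `K i`. -/
lemma avoid_aux {E : Type*} [AddCommGroup E] [Module ℂ E]
    (W : Submodule ℂ E) {ι : Type*} [Finite ι] (K : ι → Submodule ℂ E)
    (hK : ∀ i, ¬ W ≤ K i) : ∃ x ∈ W, ∀ i, x ∉ K i := by
  set p : ι → Submodule ℂ W := fun i => (K i).comap W.subtype with hp
  have hne : ¬ ∃ i, p i = ⊤ := by
    rintro ⟨i, hi⟩
    refine hK i fun x hx => ?_
    have : (⟨x, hx⟩ : W) ∈ p i := hi ▸ Submodule.mem_top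
    exact this
  have hcov : ⋃ i, (p i : Set W) ≠ Set.univ := fun hc =>
    hne (Subspace.exists_eq_top_of_iUnion_eq_univ hc)
  obtain ⟨y, hy⟩ : ∃ y : W, ∀ i, y ∉ p i := by
    by_contra hcon
    push_neg at hcon
    apply hcov
    ext y
    simp only [Set.mem_iUnion, Set.mem_univ, iff_true, SetLike.mem_coe]
    obtain ⟨i, hi⟩ := hcon y
    exact ⟨i, hi⟩
  exact ⟨y.1, y.2, fun i hi => hy i hi⟩

/-- Let `H i = ker (h i)` be hyperplanes in `ℂ^n`, `(W j)` a
nondecreasing sequence in the intersection lattice with `W m = ℂ^n` for large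
`m`, and `b i = min { m : W m ⊄ H i }`. Then (a) every arc `u` with
`u j ∈ W j` satisfies `ord hᵢ(u(t)) ≥ b i` for all `i`, and (b) some such arc
satisfies `ord hᵢ(u(t)) = b i` for all `i` simultaneously. -/
theorem stmt6 {n d : ℕ} (h : Fin d → ((Fin n → ℂ) →ₗ[ℂ] ℂ))
    (hh : ∀ i, h i ≠ 0)
    (W : ℕ → Submodule ℂ (Fin n → ℂ))
    (hlat : ∀ j, ∃ S : Finset (Fin d), W j = ⨅ i ∈ S, LinearMap.ker (h i))
    (hmono : ∀ j, W j ≤ W (j + 1))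
    (htop : ∃ M, ∀ m, M ≤ m → W m = ⊤)
    (b : Fin d → ℕ)
    (hb : ∀ i, b i = sInf {m : ℕ | ¬ W m ≤ LinearMap.ker (h i)}) :
    (∀ u : ℕ → (Fin n → ℂ), (∀ j, u j ∈ W j) →
        ∀ i, (b i : ℕ∞) ≤ (PowerSeries.mk fun m => h i (u m)).order) ∧
      (∃ u : ℕ → (Fin n → ℂ), (∀ j, u j ∈ W j) ∧
        ∀ i, (PowerSeries.mk fun m => h i (u m)).order = (b i : ℕ∞)) := by
  -- the defining set of `b i` is nonempty
  have hSne : ∀ i, {m : ℕ | ¬ W m ≤ LinearMap.ker (h i)}.Nonempty := by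
    intro i
    obtain ⟨M, hM⟩ := htop
    refine ⟨M, ?_⟩
    simp only [Set.mem_setOf_eq, hM M le_rfl]
    intro htle
    exact hh i (LinearMap.ker_eq_top.mp (top_le_iff.mp htle))
  -- `W (b i)` is not contained in `ker (h i)`
  have hbmem : ∀ i, ¬ W (b i) ≤ LinearMap.ker (h i) := fun i => by
    have := Nat.sInf_mem (hSne i)
    rw [← hb i] at this
    exact this
  -- for `m < b i`, `W m ≤ ker (h i)`
  have hlt : ∀ i, ∀ m < b i, W m ≤ LinearMap.ker (h i) := by
    intro i m hm
    by_contra hc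
    have : b i ≤ m := by
      rw [hb i]; exact Nat.sInf_le hc
    omega
  -- part (a)
  have parta : ∀ u : ℕ → (Fin n → ℂ), (∀ j, u j ∈ W j) →
      ∀ i, (b i : ℕ∞) ≤ (PowerSeries.mk fun m => h i (u m)).order := by
    intro u hu i
    apply PowerSeries.nat_le_order
    intro m hm
    rw [PowerSeries.coeff_mk]
    exact hlt i m hm (hu m)
  refine ⟨parta, ?_⟩
  -- part (b): choose `u j ∈ W j` avoiding `ker (h i)` for all `i` with `b i = j`
  have hchoice : ∀ j : ℕ, ∃ x ∈ W j, ∀ i : Fin d, b i = j → x ∉ LinearMap.ker (h i) := by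
    intro j
    obtain ⟨x, hxW, hx⟩ := avoid_aux (W j)
      (fun i : {i : Fin d // b i = j} => LinearMap.ker (h i.1))
      (fun i => by obtain ⟨i, rfl⟩ := i; exact hbmem i)
    exact ⟨x, hxW, fun i hi => hx ⟨i, hi⟩⟩
  choose u huW hu using hchoice
  refine ⟨u, huW, fun i => ?_⟩
  rw [PowerSeries.order_eq_nat]
  constructor
  · rw [PowerSeries.coeff_mk]
    exact fun hc => hu (b i) i rfl (LinearMap.mem_ker.mpr hc)
  · intro m hm
    rw [PowerSeries.coeff_mk]
    exact hlt i m hm (huW m)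
end

section
/- Let L_1, ..., L_d be d distinct lines in ℙ²(ℂ) and suppose P_1 ≠ P_2 are points with s(P_1) > 3d/5 and s(P_2) > 2d/5. Then every line L_i passes through P_1 or P_2, and the line joining P_1 and P_2 belongs to the arrangement; moreover every point Q ∉ {P_1, P_2} lying on at least two of the lines satisfies s(Q) = 2. -/
open scoped Classical

lemma line_eq_join {W P Q : Submodule ℂ (Fin 3 → ℂ)}
    (hW : Module.finrank ℂ W = 2) (hP : Module.finrank ℂ P = 1)
    (hQ : Module.finrank ℂ Q = 1) (hne : P ≠ Q)
    (h1 : P ≤ W) (h2 : Q ≤ W) : W = P ⊔ Q := by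
  have hle : P ⊔ Q ≤ W := sup_le h1 h2
  have hlt : P < P ⊔ Q := by
    refine lt_of_le_of_ne le_sup_left ?_
    intro h
    have hQP : Q ≤ P := h ▸ le_sup_right
    exact hne ((Submodule.eq_of_le_of_finrank_le hQP (by omega))).symm
  have h2le : 2 ≤ Module.finrank ℂ ↥(P ⊔ Q) := by
    have := Submodule.finrank_lt_finrank_of_lt hlt
    omega
  exact (Submodule.eq_of_le_of_finrank_le hle (by omega)).symm

/-- If among `d` distinct lines in `ℙ²(ℂ)` there are distinct
points `P₁, P₂` with `s(P₁) > 3d/5` and `s(P₂) > 2d/5`, then every line passes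
through `P₁` or `P₂`, the line joining `P₁` and `P₂` belongs to the
arrangement, and every other point lying on at least two of the lines lies on
exactly two of them. -/
theorem stmt15 {d : ℕ} (L : Fin d → Submodule ℂ (Fin 3 → ℂ))
    (hL : ∀ i, Module.finrank ℂ (L i) = 2) (hdist : Function.Injective L)
    (P₁ P₂ : Submodule ℂ (Fin 3 → ℂ))
    (hP₁ : Module.finrank ℂ P₁ = 1) (hP₂ : Module.finrank ℂ P₂ = 1)
    (hne : P₁ ≠ P₂)
    (hs₁ : 3 * d < 5 * (Finset.univ.filter fun i => P₁ ≤ L i).card)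
    (hs₂ : 2 * d < 5 * (Finset.univ.filter fun i => P₂ ≤ L i).card) :
    (∀ i, P₁ ≤ L i ∨ P₂ ≤ L i) ∧
      (∃ i, L i = P₁ ⊔ P₂) ∧
      (∀ Q : Submodule ℂ (Fin 3 → ℂ), Module.finrank ℂ Q = 1 →
        Q ≠ P₁ → Q ≠ P₂ →
        2 ≤ (Finset.univ.filter fun i => Q ≤ L i).card →
        (Finset.univ.filter fun i => Q ≤ L i).card = 2) := by
  set A₁ := Finset.univ.filter fun i => P₁ ≤ L i with hA₁
  set A₂ := Finset.univ.filter fun i => P₂ ≤ L i with hA₂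
  -- intersection has card ≤ 1
  have hinter : (A₁ ∩ A₂).card ≤ 1 := by
    rw [Finset.card_le_one]
    intro i hi j hj
    simp only [hA₁, hA₂, Finset.mem_inter, Finset.mem_filter] at hi hj
    apply hdist
    rw [line_eq_join (hL i) hP₁ hP₂ hne hi.1.2 hi.2.2,
        line_eq_join (hL j) hP₁ hP₂ hne hj.1.2 hj.2.2]
  have hunion : (A₁ ∪ A₂).card + (A₁ ∩ A₂).card = A₁.card + A₂.card :=
    Finset.card_union_add_card_inter _ _
  have hud : (A₁ ∪ A₂).card ≤ d := by
    have := Finset.card_le_univ (A₁ ∪ A₂)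
    simpa using this
  -- Part 1
  have part1 : ∀ i, P₁ ≤ L i ∨ P₂ ≤ L i := by
    intro i
    by_contra hcon
    push_neg at hcon
    have hsub : A₁ ∪ A₂ ⊆ Finset.univ \ {i} := by
      intro j hj
      simp only [hA₁, hA₂, Finset.mem_union, Finset.mem_filter] at hj
      simp only [Finset.mem_sdiff, Finset.mem_univ, Finset.mem_singleton, true_and]
      rintro rfl
      rcases hj with h | h
      · exact hcon.1 h.2
      · exact hcon.2 h.2
    have hcard : (A₁ ∪ A₂).card ≤ d - 1 := by
      have := Finset.card_le_card hsub
      have h2 : (Finset.univ \ ({i} : Finset (Fin d))).card = d - 1 := by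
        rw [Finset.card_sdiff_of_subset (by simp)]
        simp
      omega
    have hd : 0 < d := i.pos
    omega
  refine ⟨part1, ?_, ?_⟩
  · -- intersection nonempty
    have hcu : (Finset.univ : Finset (Fin d)).card < A₁.card + A₂.card := by
      simp only [Finset.card_univ, Fintype.card_fin]
      omega
    obtain ⟨i, hi⟩ := Finset.inter_nonempty_of_card_lt_card_add_card
      (Finset.subset_univ A₁) (Finset.subset_univ A₂) hcu
    simp only [hA₁, hA₂, Finset.mem_inter, Finset.mem_filter] at hi
    exact ⟨i, line_eq_join (hL i) hP₁ hP₂ hne hi.1.2 hi.2.2⟩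
  · intro Q hQ hQ1 hQ2 hcard
    set B := Finset.univ.filter fun i => Q ≤ L i with hB
    have hsub : B ⊆ (Finset.univ.filter fun i => Q ≤ L i ∧ P₁ ≤ L i) ∪
        (Finset.univ.filter fun i => Q ≤ L i ∧ P₂ ≤ L i) := by
      intro i hi
      simp only [hB, Finset.mem_filter] at hi
      simp only [Finset.mem_union, Finset.mem_filter, Finset.mem_univ, true_and]
      rcases part1 i with h | h
      · exact Or.inl ⟨hi.2, h⟩
      · exact Or.inr ⟨hi.2, h⟩
    have hc1 : (Finset.univ.filter fun i => Q ≤ L i ∧ P₁ ≤ L i).card ≤ 1 := by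
      rw [Finset.card_le_one]
      intro i hi j hj
      simp only [Finset.mem_filter] at hi hj
      apply hdist
      rw [line_eq_join (hL i) hQ hP₁ hQ1 hi.2.1 hi.2.2,
          line_eq_join (hL j) hQ hP₁ hQ1 hj.2.1 hj.2.2]
    have hc2 : (Finset.univ.filter fun i => Q ≤ L i ∧ P₂ ≤ L i).card ≤ 1 := by
      rw [Finset.card_le_one]
      intro i hi j hj
      simp only [Finset.mem_filter] at hi hj
      apply hdist
      rw [line_eq_join (hL i) hQ hP₂ hQ2 hi.2.1 hi.2.2,
          line_eq_join (hL j) hQ hP₂ hQ2 hj.2.1 hj.2.2]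
    have := Finset.card_le_card hsub
    have := Finset.card_union_le (Finset.univ.filter fun i => Q ≤ L i ∧ P₁ ≤ L i)
        (Finset.univ.filter fun i => Q ≤ L i ∧ P₂ ≤ L i)
    omega
end
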